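/- Let T be a finite rooted tree. Define a traversal order: at a vertex v of odd depth, visit v first and then recursively traverse its children in order; at a vertex of even depth, recursively traverse the children first and then visit v. If the resulting order is v₁, v₂, …, v_n, then dist_T(vᵢ, vᵢ₊₁) ≤ 3 for all 1 ≤ i ≤ n − 1, and dist_T(v₁, v_n) ≤ 1. -/

import Mathlib

/-- Finite rooted trees: a node with a list of subtrees. Vertices are addressed
by their path of child indices from the root (the root is `[]`). -/
inductive RTree where
  | node : List RTree → RTree

namespace RTree

-- The alternating traversal: at odd depth, visit the vertex before its
-- subtrees; at even depth, after its subtrees.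
-- `traverse d t` lists the vertex paths of `t` (relative to `t`'s root),
-- where `d` is the depth of the root of `t`.  `traverseList` handles the
-- list of children starting at child index `i`.
mutual
  def traverse : ℕ → RTree → List (List ℕ)
    | d, .node cs =>
        if d % 2 = 1 then [] :: traverseList (d + 1) 0 cs
        else traverseList (d + 1) 0 cs ++ [[]]
  def traverseList : ℕ → ℕ → List RTree → List (List ℕ)
    | _, _, [] => []
    | d, i, t :: ts => (traverse d t).map (fun p => i :: p) ++ traverseList d (i + 1) ts
end

/-- Length of the longest common prefix of two vertex paths. -/
def lcpLen : List ℕ → List ℕ → ℕ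
  | a :: as, b :: bs => if a = b then 1 + lcpLen as bs else 0
  | _, _ => 0

/-- Tree (path) distance between two vertices given by their paths from the
root: go up to the deepest common ancestor and back down. -/
def tdist (p q : List ℕ) : ℕ :=
  (p.length - lcpLen p q) + (q.length - lcpLen p q)

end RTree


/-!
Only the first and last vertex of each subtree's traversal matter. At odd depth the traversal of a
subtree starts at its root and ends at most one step below it; at even depth it starts at most one
step below the root and ends at the root. Hence at each junction between consecutive sibling subtrees
one endpoint is a sibling root and the other is at most its child, so the two are at distance at
most 3; the junction between the root and its children's block is even closer. For the whole tree
(depth 1) the traversal starts at the root and ends at a child of it or at the root itself.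
-/

namespace RTree

lemma lcpLen_nil_left (q : List ℕ) : lcpLen [] q = 0 := by
  cases q <;> rfl

lemma tdist_nil_left (q : List ℕ) : tdist [] q = q.length := by
  simp [tdist, lcpLen_nil_left]

lemma tdist_le_length_add_length (p q : List ℕ) : tdist p q ≤ p.length + q.length := by
  unfold tdist; omega

lemma tdist_cons_cons (i : ℕ) (p q : List ℕ) : tdist (i :: p) (i :: q) = tdist p q := by
  have hlcp : lcpLen (i :: p) (i :: q) = 1 + lcpLen p q := by simp [lcpLen]
  simp only [tdist, hlcp, List.length_cons]
  omega

lemma traverse_ne_nil (d : ℕ) (t : RTree) : traverse d t ≠ [] := by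
  cases t
  unfold traverse
  split <;> simp

lemma head?_traverse_of_odd {d : ℕ} (hd : d % 2 = 1) (cs : List RTree) :
    (traverse d (.node cs)).head? = some [] := by
  simp [traverse, hd]

lemma getLast?_traverse_of_even {d : ℕ} (hd : d % 2 = 0) (cs : List RTree) :
    (traverse d (.node cs)).getLast? = some [] := by
  simp [traverse, hd]

lemma head?_traverseList_cons (d i : ℕ) (t : RTree) (ts : List RTree) :
    (traverseList d i (t :: ts)).head? = (traverse d t).head?.map (i :: ·) := by
  obtain ⟨h, hh⟩ := Option.isSome_iff_exists.mp (List.isSome_head?.mpr (traverse_ne_nil d t))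
  simp [traverseList, List.head?_append, hh]

lemma exists_cons_of_mem_getLast?_traverseList {d i : ℕ} {ts : List RTree} {l : List ℕ}
    (hl : l ∈ (traverseList d i ts).getLast?) :
    ∃ j t, ∃ p ∈ (traverse d t).getLast?, l = j :: p := by
  induction ts generalizing i with
  | nil => simp [traverseList] at hl
  | cons t ts ih =>
    rw [traverseList, List.getLast?_append, List.getLast?_map] at hl
    cases hrest : (traverseList d (i + 1) ts).getLast? with
    | some l' =>
      rw [hrest, Option.some_or, Option.mem_def, Option.some_inj] at hl
      exact ih (hl ▸ hrest)
    | none =>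
      rw [hrest, Option.none_or, Option.mem_map] at hl
      obtain ⟨p, hp, rfl⟩ := hl
      exact ⟨i, t, p, hp, rfl⟩

lemma length_le_one_of_mem_head?_traverse {d : ℕ} {t : RTree} {h : List ℕ}
    (hh : h ∈ (traverse d t).head?) : h.length ≤ 1 := by
  obtain ⟨cs⟩ := t
  rcases Nat.mod_two_eq_zero_or_one d with hd | hd
  · simp only [traverse, hd, zero_ne_one, if_false] at hh
    cases cs with
    | nil => simp_all [traverseList]
    | cons c cs =>
      rw [List.head?_append, head?_traverseList_cons] at hh
      obtain ⟨cs'⟩ := c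
      rw [head?_traverse_of_odd (by omega)] at hh
      simp only [Option.map_some, Option.some_or, Option.mem_def, Option.some_inj] at hh
      simp [← hh]
  · simp_all [head?_traverse_of_odd hd]

lemma length_le_one_of_mem_getLast?_traverse {d : ℕ} {t : RTree} {l : List ℕ}
    (hl : l ∈ (traverse d t).getLast?) : l.length ≤ 1 := by
  obtain ⟨cs⟩ := t
  rcases Nat.mod_two_eq_zero_or_one d with hd | hd
  · simp_all [getLast?_traverse_of_even hd]
  · simp only [traverse, hd, if_true, List.getLast?_cons, Option.mem_def,
      Option.some.injEq] at hl
    cases hlast : (traverseList (d + 1) 0 cs).getLast? with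
    | none => simp_all
    | some l' =>
      obtain ⟨j, ⟨cs'⟩, p, hp, rfl⟩ := exists_cons_of_mem_getLast?_traverseList hlast
      rw [getLast?_traverse_of_even (by omega), Option.mem_def, Option.some_inj] at hp
      rw [← hl, hlast, ← hp]
      rfl

lemma length_le_two_of_mem_head?_traverseList {d i : ℕ} {ts : List RTree} {h : List ℕ}
    (hh : h ∈ (traverseList d i ts).head?) : h.length ≤ 2 := by
  cases ts with
  | nil => simp [traverseList] at hh
  | cons t ts =>
    rw [head?_traverseList_cons, Option.mem_map] at hh
    obtain ⟨p, hp, rfl⟩ := hh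
    simpa using length_le_one_of_mem_head?_traverse hp

lemma length_le_two_of_mem_getLast?_traverseList {d i : ℕ} {ts : List RTree} {l : List ℕ}
    (hl : l ∈ (traverseList d i ts).getLast?) : l.length ≤ 2 := by
  obtain ⟨j, t, p, hp, rfl⟩ := exists_cons_of_mem_getLast?_traverseList hl
  simpa using length_le_one_of_mem_getLast?_traverse hp

lemma length_add_length_le_one {d : ℕ} {t t' : RTree} {l h : List ℕ}
    (hl : l ∈ (traverse d t).getLast?) (hh : h ∈ (traverse d t').head?) :
    l.length + h.length ≤ 1 := by
  obtain ⟨cs⟩ := t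
  obtain ⟨cs'⟩ := t'
  rcases Nat.mod_two_eq_zero_or_one d with hd | hd
  · rw [getLast?_traverse_of_even hd, Option.mem_some_iff] at hl
    simpa [← hl] using length_le_one_of_mem_head?_traverse hh
  · rw [head?_traverse_of_odd hd, Option.mem_some_iff] at hh
    simpa [← hh] using length_le_one_of_mem_getLast?_traverse hl

mutual

theorem isChain_traverse : ∀ (d : ℕ) (t : RTree), (traverse d t).IsChain (tdist · · ≤ 3)
  | d, .node cs => by
    have hcs := isChain_traverseList (d + 1) 0 cs
    unfold traverse
    split
    · refine List.isChain_cons.mpr ⟨fun y hy => ?_, hcs⟩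
      rw [tdist_nil_left]
      exact (length_le_two_of_mem_head?_traverseList hy).trans (by norm_num)
    · refine List.isChain_append.mpr ⟨hcs, List.isChain_singleton _, fun x hx y hy => ?_⟩
      obtain rfl : y = [] := by simpa using hy.symm
      have := length_le_two_of_mem_getLast?_traverseList hx
      have := tdist_le_length_add_length x []
      simp only [List.length_nil] at this
      omega

theorem isChain_traverseList :
    ∀ (d i : ℕ) (ts : List RTree), (traverseList d i ts).IsChain (tdist · · ≤ 3)
  | _, _, [] => List.isChain_nil
  | d, i, t :: ts => by
    have hts := isChain_traverseList d (i + 1) ts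
    rw [traverseList, List.isChain_append, List.isChain_map]
    refine ⟨(isChain_traverse d t).imp fun p q hpq => by rwa [tdist_cons_cons], hts,
      fun x hx y hy => ?_⟩
    rw [List.getLast?_map, Option.mem_map] at hx
    obtain ⟨l, hl, rfl⟩ := hx
    cases ts with
    | nil => simp [traverseList] at hy
    | cons t' ts =>
      rw [head?_traverseList_cons, Option.mem_map] at hy
      obtain ⟨h, hh, rfl⟩ := hy
      have := length_add_length_le_one hl hh
      have := tdist_le_length_add_length (i :: l) ((i + 1) :: h)
      simp only [List.length_cons] at this
      omega

end

end RTree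

open RTree in
/-- If `v₁, …, v_n` is the alternating traversal order of a finite rooted tree
(root having depth 1), then `dist_T(vᵢ, vᵢ₊₁) ≤ 3` for all `1 ≤ i ≤ n − 1` and
`dist_T(v₁, v_n) ≤ 1`. -/
theorem stmt9 (t : RTree) :
    (∀ i : ℕ, i + 1 < (traverse 1 t).length →
      tdist ((traverse 1 t)[i]!) ((traverse 1 t)[i + 1]!) ≤ 3) ∧
    ((traverse 1 t) ≠ [] →
      tdist ((traverse 1 t).head!) ((traverse 1 t).getLast!) ≤ 1) := by
  obtain ⟨cs⟩ := t
  refine ⟨fun i hi => ?_, fun hne => ?_⟩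
  · rw [getElem!_pos _ i (by omega), getElem!_pos _ (i + 1) hi]
    exact List.isChain_iff_getElem.mp (isChain_traverse 1 _) i hi
  · have hlast := List.getLast?_eq_some_getLast hne
    rw [List.head!_eq_head?_getD, head?_traverse_of_odd rfl, Option.getD_some,
      List.getLast!_of_getLast? hlast, tdist_nil_left]
    exact length_le_one_of_mem_getLast?_traverse hlast
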